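/- arXiv:2511.02819 — 3 statements merged into one kernel-verified Lean document; each statement's English description precedes it below -/
import Mathlib

section
/- For any finite simple loopless digraph D, ⍺⃗(D) ≥ Σ_{v∈V(D)} ρ_D(v) · (1 + max{0, 1 - ρ_D(v) - Σ_{u∈N(v)} ρ_D(u)}), where ρ_D(v) = 1/(1+d_v⁺) + 1/(1+d_v⁻) - 1/(1+d_v). -/
open Finset
open scoped Classical

variable {V : Type*}

/-- Out-neighborhood of `v` in the digraph with arc relation `A`. -/
noncomputable def outN [Fintype V] (A : V → V → Prop) (v : V) : Finset V :=
  Finset.univ.filter (fun w => A v w)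

/-- In-neighborhood of `v`. -/
noncomputable def inN [Fintype V] (A : V → V → Prop) (v : V) : Finset V :=
  Finset.univ.filter (fun w => A w v)

/-- Neighborhood `N(v) = N⁺(v) ∪ N⁻(v)`. -/
noncomputable def nbhd [Fintype V] (A : V → V → Prop) (v : V) : Finset V :=
  outN A v ∪ inN A v

/-- `ρ_D(v) = 1/(1+d⁺) + 1/(1+d⁻) − 1/(1+d)`. -/
noncomputable def rho [Fintype V] (A : V → V → Prop) (v : V) : ℝ :=
  1 / (1 + ((outN A v).card : ℝ)) + 1 / (1 + ((inN A v).card : ℝ))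
    - 1 / (1 + ((nbhd A v).card : ℝ))

/-- A vertex set `T` is acyclic if the digraph induced on `T` has no directed cycle,
i.e. the transitive closure of the restricted arc relation has no fixed point. -/
def IsAcyclicOn (A : V → V → Prop) (T : Finset V) : Prop :=
  ∀ v : V, ¬ Relation.TransGen (fun x y => x ∈ T ∧ y ∈ T ∧ A x y) v v

/-- Output of the DL algorithm for labeling `L`: vertices with both a right
in-neighbor and a right out-neighbor. -/
noncomputable def DLout [Fintype V] (A : V → V → Prop)
    (L : V ≃ Fin (Fintype.card V)) : Finset V :=
  Finset.univ.filter (fun u =>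
    (∃ w ∈ inN A u, L u < L w) ∧ (∃ w ∈ outN A u, L u < L w))

section AUX
variable [Fintype V] (A : V → V → Prop)

lemma aux_mem_outN {v w : V} : w ∈ outN A v ↔ A v w := by simp [outN]
lemma aux_mem_inN {v w : V} : w ∈ inN A v ↔ A w v := by simp [inN]
lemma aux_mem_nbhd {v w : V} : w ∈ nbhd A v ↔ A v w ∨ A w v := by
  simp [nbhd, aux_mem_outN, aux_mem_inN]

noncomputable def Tset (L : V ≃ Fin (Fintype.card V)) : Finset V :=
  Finset.univ.filter (fun v => v ∉ DLout A L)

variable {A}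

lemma aux_mem_Tset (hA : Irreflexive A) {L : V ≃ Fin (Fintype.card V)} {v : V} :
    v ∈ Tset A L ↔ (∀ w ∈ inN A v, L w < L v) ∨ (∀ w ∈ outN A v, L w < L v) := by
  have key : ∀ (S : Finset V), v ∉ S → ((∀ w ∈ S, L w ≤ L v) ↔ (∀ w ∈ S, L w < L v)) := by
    intro S hvS
    constructor <;> intro h w hw
    · exact lt_of_le_of_ne (h w hw) (fun e => hvS ((L.injective e) ▸ hw))
    · exact le_of_lt (h w hw)
  have hvin : v ∉ inN A v := fun h => hA v ((aux_mem_inN A).mp h)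
  have hvout : v ∉ outN A v := fun h => hA v ((aux_mem_outN A).mp h)
  simp only [Tset, mem_filter, mem_univ, true_and, DLout, not_and_or]
  push_neg
  rw [key _ hvin, key _ hvout]

lemma aux_Tset_acyclic (hA : Irreflexive A) (L : V ≃ Fin (Fintype.card V)) :
    IsAcyclicOn A (Tset A L) := by
  intro v hv
  set R : V → V → Prop := fun x y => x ∈ Tset A L ∧ y ∈ Tset A L ∧ A x y with hR
  set C : Finset V := Finset.univ.filter (fun x => Relation.TransGen R x x) with hC
  have hvC : v ∈ C := by simp [hC, hv]
  obtain ⟨u, huC, hmin⟩ := C.exists_min_image (fun x => L x) ⟨v, hvC⟩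
  have hu : Relation.TransGen R u u := by
    simpa [hC] using huC
  obtain ⟨w, hRuw, hwu⟩ := Relation.TransGen.head'_iff.mp hu
  obtain ⟨w', huw', hRw'u⟩ := Relation.TransGen.tail'_iff.mp hu
  have hwC : w ∈ C := by
    simp only [hC, mem_filter, mem_univ, true_and]
    exact Relation.TransGen.tail' hwu hRuw
  have hw'C : w' ∈ C := by
    simp only [hC, mem_filter, mem_univ, true_and]
    exact Relation.TransGen.head' hRw'u huw'
  have hwne : w ≠ u := fun e => hA u (e ▸ hRuw.2.2)
  have hw'ne : w' ≠ u := fun e => hA u (e ▸ hRw'u.2.2)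
  have hlw : L u < L w :=
    lt_of_le_of_ne (hmin w hwC) (fun e => hwne (L.injective e.symm))
  have hlw' : L u < L w' :=
    lt_of_le_of_ne (hmin w' hw'C) (fun e => hw'ne (L.injective e.symm))
  have huT : u ∈ Tset A L := hRuw.1
  rcases (aux_mem_Tset hA).mp huT with h | h
  · exact absurd (h w' ((aux_mem_inN A).mpr hRw'u.2.2)) (asymm hlw')
  · exact absurd (h w ((aux_mem_outN A).mpr hRuw.2.2)) (asymm hlw)

end AUX

section AUX2
variable [Fintype V]

lemma aux_count (S : Finset V) (v : V) (hv : v ∉ S) :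
    ((Finset.univ : Finset (V ≃ Fin (Fintype.card V))).filter
        (fun L => ∀ w ∈ S, L w < L v)).card * (S.card + 1)
      = Fintype.card (V ≃ Fin (Fintype.card V)) := by
  set T : Finset V := insert v S with hT
  have hvT : v ∈ T := mem_insert_self v S
  set E : V → Finset (V ≃ Fin (Fintype.card V)) := fun w =>
    Finset.univ.filter (fun L => ∀ x ∈ T, x ≠ w → L x < L w) with hE
  have hgen : ∀ a ∈ T, ∀ b ∈ T, ∀ L : V ≃ Fin (Fintype.card V),
      (∀ x ∈ T, x ≠ b → L x < L b) →
      ∀ x ∈ T, x ≠ a → ((Equiv.swap a b).trans L) x < ((Equiv.swap a b).trans L) a := by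
    intro a ha b hb L hL x hx hxa
    have h1 : ((Equiv.swap a b).trans L) a = L b := by simp
    by_cases hxb : x = b
    · have h2 : ((Equiv.swap a b).trans L) x = L a := by rw [hxb]; simp
      rw [h1, h2]
      exact hL a ha (fun e => hxa (hxb.trans e.symm))
    · have h2 : ((Equiv.swap a b).trans L) x = L x := by
        simp [Equiv.swap_apply_of_ne_of_ne hxa hxb]
      rw [h1, h2]
      exact hL x hx hxb
  have hEcard : ∀ w ∈ T, (E w).card = (E v).card := by
    intro w hw
    refine Finset.card_bij' (fun L _ => (Equiv.swap v w).trans L)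
      (fun L _ => (Equiv.swap w v).trans L) ?_ ?_ ?_ ?_
    · intro L hL
      simp only [hE, mem_filter, mem_univ, true_and] at hL ⊢
      exact hgen v hvT w hw L hL
    · intro L hL
      simp only [hE, mem_filter, mem_univ, true_and] at hL ⊢
      exact hgen w hw v hvT L hL
    · intro L _
      ext x
      simp only [Equiv.trans_apply]
      rw [Equiv.swap_comm w v, Equiv.swap_apply_self]
    · intro L _
      ext x
      simp only [Equiv.trans_apply]
      rw [Equiv.swap_comm v w, Equiv.swap_apply_self]
  have hdisj : ∀ x ∈ T, ∀ y ∈ T, x ≠ y → Disjoint (E x) (E y) := by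
    intro x hx y hy hxy
    rw [Finset.disjoint_left]
    intro L hLx hLy
    simp only [hE, mem_filter, mem_univ, true_and] at hLx hLy
    exact absurd (hLy x hx hxy) (asymm (hLx y hy (Ne.symm hxy)))
  have hcover : T.biUnion E = Finset.univ := by
    ext L
    simp only [mem_biUnion, mem_univ, iff_true]
    obtain ⟨w, hw, hmax⟩ := T.exists_max_image (fun x => L x) ⟨v, hvT⟩
    refine ⟨w, hw, ?_⟩
    simp only [hE, mem_filter, mem_univ, true_and]
    exact fun x hx hxw => lt_of_le_of_ne (hmax x hx) (fun e => hxw (L.injective e))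
  have hsum : Fintype.card (V ≃ Fin (Fintype.card V)) = T.card * (E v).card := by
    rw [← card_univ, ← hcover, Finset.card_biUnion hdisj,
      Finset.sum_congr rfl hEcard, Finset.sum_const, smul_eq_mul]
  have hEv : E v = Finset.univ.filter (fun L => ∀ w ∈ S, L w < L v) := by
    apply Finset.filter_congr
    intro L _
    constructor
    · intro h w hw
      exact h w (mem_insert_of_mem hw) (fun e => hv (e ▸ hw))
    · intro h x hx hxv
      exact h x ((mem_insert.mp hx).resolve_left hxv)
  rw [hsum, hEv, hT, Finset.card_insert_of_notMem hv, mul_comm]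

lemma aux_count_real (S : Finset V) (v : V) (hv : v ∉ S) :
    ((((Finset.univ : Finset (V ≃ Fin (Fintype.card V))).filter
        (fun L => ∀ w ∈ S, L w < L v)).card : ℝ) : ℝ)
      = (Fintype.card (V ≃ Fin (Fintype.card V)) : ℝ) / (1 + S.card) := by
  have h := aux_count S v hv
  have hpos : (0 : ℝ) < 1 + (S.card : ℝ) := by positivity
  rw [eq_div_iff (ne_of_gt hpos)]
  have := congrArg (fun n : ℕ => (n : ℝ)) h
  push_cast at this
  linarith

end AUX2

section AUX3
variable [Fintype V] {A : V → V → Prop}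

lemma aux_card_Tset (hA : Irreflexive A) (v : V) :
    ((((Finset.univ : Finset (V ≃ Fin (Fintype.card V))).filter
        (fun L => v ∈ Tset A L)).card : ℝ) : ℝ)
      = (Fintype.card (V ≃ Fin (Fintype.card V)) : ℝ) * rho A v := by
  classical
  have hvin : v ∉ inN A v := fun h => hA v ((aux_mem_inN A).mp h)
  have hvout : v ∉ outN A v := fun h => hA v ((aux_mem_outN A).mp h)
  have hvn : v ∉ nbhd A v := by
    intro h
    rcases (aux_mem_nbhd A).mp h with h | h <;> exact hA v h
  have h1 := aux_count_real (V := V) (inN A v) v hvin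
  have h2 := aux_count_real (V := V) (outN A v) v hvout
  have h3 := aux_count_real (V := V) (nbhd A v) v hvn
  have hf : (Finset.univ : Finset (V ≃ Fin (Fintype.card V))).filter
      (fun L => v ∈ Tset A L)
      = Finset.univ.filter (fun L => (∀ w ∈ inN A v, L w < L v)
          ∨ (∀ w ∈ outN A v, L w < L v)) := by
    apply Finset.filter_congr
    intro L _
    exact aux_mem_Tset hA
  rw [hf, Finset.filter_or]
  have hinter := Finset.card_union_add_card_inter
    ((Finset.univ : Finset (V ≃ Fin (Fintype.card V))).filter
      (fun L => ∀ w ∈ inN A v, L w < L v))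
    (Finset.univ.filter (fun L => ∀ w ∈ outN A v, L w < L v))
  rw [← Finset.filter_and] at hinter
  have hand : (Finset.univ : Finset (V ≃ Fin (Fintype.card V))).filter
      (fun L => (∀ w ∈ inN A v, L w < L v) ∧ (∀ w ∈ outN A v, L w < L v))
      = Finset.univ.filter (fun L => ∀ w ∈ nbhd A v, L w < L v) := by
    apply Finset.filter_congr
    intro L _
    rw [nbhd, Finset.forall_mem_union]
    tauto
  rw [hand] at hinter
  have hcast := congrArg (fun n : ℕ => (n : ℝ)) hinter
  push_cast at hcast
  rw [h1, h2, h3] at hcast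
  have ha : (0:ℝ) < 1 + ((outN A v).card : ℝ) := by positivity
  have hb : (0:ℝ) < 1 + ((inN A v).card : ℝ) := by positivity
  have hc : (0:ℝ) < 1 + ((nbhd A v).card : ℝ) := by positivity
  rw [rho]
  rw [mul_sub, mul_add, mul_one_div, mul_one_div, mul_one_div]
  linarith

lemma aux_rho_nonneg (hA : Irreflexive A) (v : V) : 0 ≤ rho A v := by
  have h := aux_card_Tset hA v
  have hM : (0:ℝ) < Fintype.card (V ≃ Fin (Fintype.card V)) := by
    have : Nonempty (V ≃ Fin (Fintype.card V)) := ⟨Fintype.equivFin V⟩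
    have h' := Fintype.card_pos (α := V ≃ Fin (Fintype.card V))
    exact_mod_cast h' 
  nlinarith [Nat.cast_nonneg (α := ℝ) (((Finset.univ : Finset (V ≃ Fin (Fintype.card V))).filter
      (fun L => v ∈ Tset A L)).card)]

/-- The combined acyclic set built from two labelings. -/
noncomputable def goodSet (A : V → V → Prop)
    (L1 L2 : V ≃ Fin (Fintype.card V)) : Finset V :=
  Tset A L2 ∪ (Tset A L1).filter
    (fun v => v ∉ Tset A L2 ∧ ∀ u ∈ nbhd A v, u ∉ Tset A L2)

lemma aux_good_acyclic (hA : Irreflexive A) (L1 L2 : V ≃ Fin (Fintype.card V)) :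
    IsAcyclicOn A (goodSet A L1 L2) := by
  classical
  set S : Finset V := (Tset A L1).filter
    (fun v => v ∉ Tset A L2 ∧ ∀ u ∈ nbhd A v, u ∉ Tset A L2) with hS
  set T : Finset V := goodSet A L1 L2 with hTdef
  have hTmem : ∀ x, x ∈ T ↔ x ∈ Tset A L2 ∨ x ∈ S := by
    intro x
    simp [hTdef, goodSet, hS, Finset.mem_union]
  set R : V → V → Prop := fun x y => x ∈ T ∧ y ∈ T ∧ A x y with hR
  -- forward closure of S under R
  have hfwd : ∀ x y, R x y → x ∈ S → y ∈ S := by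
    intro x y hxy hx
    have hyn : y ∈ nbhd A x := (aux_mem_nbhd A).mpr (Or.inl hxy.2.2)
    have hy2 : y ∉ Tset A L2 := (Finset.mem_filter.mp hx).2.2 y hyn
    rcases (hTmem y).mp hxy.2.1 with h | h
    · exact absurd h hy2
    · exact h
  have hbwd : ∀ x y, R x y → y ∈ S → x ∈ S := by
    intro x y hxy hy
    have hxn : x ∈ nbhd A y := (aux_mem_nbhd A).mpr (Or.inr hxy.2.2)
    have hx2 : x ∉ Tset A L2 := (Finset.mem_filter.mp hy).2.2 x hxn
    rcases (hTmem x).mp hxy.1 with h | h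
    · exact absurd h hx2
    · exact h
  intro v hv
  by_cases hvS : v ∈ S
  · -- the cycle lies in Tset A L1
    have key : ∀ a b, Relation.TransGen R a b → a ∈ S →
        Relation.TransGen (fun x y => x ∈ Tset A L1 ∧ y ∈ Tset A L1 ∧ A x y) a b ∧ b ∈ S := by
      intro a b h
      induction h with
      | single hab =>
        intro ha
        have hb := hfwd _ _ hab ha
        exact ⟨Relation.TransGen.single
          ⟨(Finset.mem_filter.mp ha).1, (Finset.mem_filter.mp hb).1, hab.2.2⟩, hb⟩
      | tail hab hbc ih =>
        intro ha
        obtain ⟨h1, hbS⟩ := ih ha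
        have hcS := hfwd _ _ hbc hbS
        exact ⟨h1.tail ⟨(Finset.mem_filter.mp hbS).1, (Finset.mem_filter.mp hcS).1, hbc.2.2⟩, hcS⟩
    exact aux_Tset_acyclic hA L1 v ((key v v hv hvS).1)
  · -- the cycle lies in Tset A L2
    have key : ∀ a b, Relation.TransGen R a b → b ∉ S →
        Relation.TransGen (fun x y => x ∈ Tset A L2 ∧ y ∈ Tset A L2 ∧ A x y) a b ∧ a ∉ S := by
      intro a b h
      induction h with
      | single hab =>
        intro hb
        have ha : a ∉ S := fun h' => hb (hfwd _ _ hab h')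
        have ha2 : _ ∈ Tset A L2 := ((hTmem _).mp hab.1).resolve_right ha
        have hb2 : _ ∈ Tset A L2 := ((hTmem _).mp hab.2.1).resolve_right hb
        exact ⟨Relation.TransGen.single ⟨ha2, hb2, hab.2.2⟩, ha⟩
      | tail hab hbc ih =>
        intro hc
        have hb : _ ∉ S := fun h' => hc (hfwd _ _ hbc h')
        obtain ⟨h1, haS⟩ := ih hb
        have hb2 : _ ∈ Tset A L2 := ((hTmem _).mp hbc.1).resolve_right hb
        have hc2 : _ ∈ Tset A L2 := ((hTmem _).mp hbc.2.1).resolve_right hc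
        exact ⟨h1.tail ⟨hb2, hc2, hbc.2.2⟩, haS⟩
    exact aux_Tset_acyclic hA L2 v ((key v v hv hvS).1)

end AUX3

section AUX4
variable [Fintype V]

noncomputable def auxF (A : V → V → Prop) (v : V)
    (L : V ≃ Fin (Fintype.card V)) : ℝ :=
  if v ∈ Tset A L then 1 else 0

noncomputable def auxG (A : V → V → Prop) (v : V)
    (L : V ≃ Fin (Fintype.card V)) : ℝ :=
  if (v ∉ Tset A L ∧ ∀ u ∈ nbhd A v, u ∉ Tset A L) then 1 else 0

variable {A : V → V → Prop}

lemma auxF_nonneg (v : V) (L : V ≃ Fin (Fintype.card V)) : 0 ≤ auxF A v L := by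
  unfold auxF; split <;> norm_num

lemma auxG_nonneg (v : V) (L : V ≃ Fin (Fintype.card V)) : 0 ≤ auxG A v L := by
  unfold auxG; split <;> norm_num

lemma auxF_sum (hA : Irreflexive A) (v : V) :
    ∑ L : V ≃ Fin (Fintype.card V), auxF A v L
      = (Fintype.card (V ≃ Fin (Fintype.card V)) : ℝ) * rho A v := by
  unfold auxF
  rw [Finset.sum_boole]
  exact aux_card_Tset hA v

lemma auxG_pointwise (v : V) (L : V ≃ Fin (Fintype.card V)) :
    1 - auxF A v L - ∑ u ∈ nbhd A v, auxF A u L ≤ auxG A v L := by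
  have hS0 : 0 ≤ ∑ u ∈ nbhd A v, auxF A u L :=
    Finset.sum_nonneg (fun u _ => auxF_nonneg u L)
  have hv0 := auxF_nonneg (A := A) v L
  by_cases hc : (v ∉ Tset A L ∧ ∀ u ∈ nbhd A v, u ∉ Tset A L)
  · have h : auxG A v L = 1 := by unfold auxG; rw [if_pos hc]
    rw [h]
    linarith
  · have h : auxG A v L = 0 := by unfold auxG; rw [if_neg hc]
    rw [h]
    push_neg at hc
    by_cases hv2 : v ∈ Tset A L
    · have h1 : auxF A v L = 1 := by unfold auxF; rw [if_pos hv2]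
      linarith
    · obtain ⟨u, hu, hu2⟩ := hc hv2
      have h1 : auxF A u L = 1 := by unfold auxF; rw [if_pos hu2]
      have h2 : (1:ℝ) ≤ ∑ u ∈ nbhd A v, auxF A u L := by
        rw [← h1]
        exact Finset.single_le_sum (fun i _ => auxF_nonneg i L) hu
      linarith

lemma auxG_sum (hA : Irreflexive A) (v : V) :
    (Fintype.card (V ≃ Fin (Fintype.card V)) : ℝ)
        * max 0 (1 - rho A v - ∑ u ∈ nbhd A v, rho A u)
      ≤ ∑ L : V ≃ Fin (Fintype.card V), auxG A v L := by
  rw [mul_max_of_nonneg _ _ (Nat.cast_nonneg _), mul_zero]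
  apply max_le
  · exact Finset.sum_nonneg (fun L _ => auxG_nonneg v L)
  · have h1 : ∑ L : V ≃ Fin (Fintype.card V), (1 - auxF A v L - ∑ u ∈ nbhd A v, auxF A u L)
        = (Fintype.card (V ≃ Fin (Fintype.card V)) : ℝ)
            * (1 - rho A v - ∑ u ∈ nbhd A v, rho A u) := by
      rw [Finset.sum_sub_distrib, Finset.sum_sub_distrib, Finset.sum_const,
        Finset.card_univ, nsmul_eq_mul, mul_one, auxF_sum hA v, Finset.sum_comm,
        Finset.sum_congr rfl (fun u _ => auxF_sum hA u), ← Finset.mul_sum]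
      ring
    rw [← h1]
    exact Finset.sum_le_sum (fun L _ => auxG_pointwise v L)

lemma aux_good_card (L1 L2 : V ≃ Fin (Fintype.card V)) :
    ((goodSet A L1 L2).card : ℝ)
      = ∑ v : V, (auxF A v L2 + auxF A v L1 * auxG A v L2) := by
  classical
  have h1 : ((goodSet A L1 L2).card : ℝ)
      = ∑ v : V, (if v ∈ goodSet A L1 L2 then (1:ℝ) else 0) := by
    rw [Finset.sum_boole, Finset.filter_univ_mem]
  rw [h1]
  apply Finset.sum_congr rfl
  intro v _
  have hmem : v ∈ goodSet A L1 L2 ↔ v ∈ Tset A L2 ∨ (v ∈ Tset A L1 ∧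
      (v ∉ Tset A L2 ∧ ∀ u ∈ nbhd A v, u ∉ Tset A L2)) := by
    simp [goodSet, Finset.mem_union, Finset.mem_filter, and_assoc]
  unfold auxF auxG
  by_cases h2 : v ∈ Tset A L2
  · have hcf : ¬ (v ∉ Tset A L2 ∧ ∀ u ∈ nbhd A v, u ∉ Tset A L2) := fun hc => hc.1 h2
    rw [if_pos h2, if_neg hcf, mul_zero, add_zero, if_pos (hmem.mpr (Or.inl h2))]
  · by_cases hc : (v ∉ Tset A L2 ∧ ∀ u ∈ nbhd A v, u ∉ Tset A L2)
    · by_cases h1' : v ∈ Tset A L1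
      · rw [if_neg h2, if_pos hc, if_pos h1', mul_one, zero_add,
          if_pos (hmem.mpr (Or.inr ⟨h1', hc⟩))]
      · have hng : v ∉ goodSet A L1 L2 := by
          rw [hmem]
          rintro (h | h)
          · exact h2 h
          · exact h1' h.1
        rw [if_neg h2, if_pos hc, if_neg h1', mul_one, zero_add, if_neg hng]
    · have hng : v ∉ goodSet A L1 L2 := by
        rw [hmem]
        rintro (h | h)
        · exact h2 h
        · exact hc h.2
      rw [if_neg h2, if_neg hc, mul_zero, add_zero, if_neg hng]

end AUX4

/-- Neighborhood-based (Selkow-type) refinement of the AGJS bound. -/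
theorem stmt_3 [Fintype V] (A : V → V → Prop) (hA : Irreflexive A) :
    ∃ T : Finset V, IsAcyclicOn A T ∧
      (∑ v : V, rho A v *
        (1 + max 0 (1 - rho A v - ∑ u ∈ nbhd A v, rho A u))) ≤ (T.card : ℝ) := by
  classical
  have hM0 : (0:ℝ) < (Fintype.card (V ≃ Fin (Fintype.card V)) : ℝ) := by
    have : Nonempty (V ≃ Fin (Fintype.card V)) := ⟨Fintype.equivFin V⟩
    have h' := Fintype.card_pos (α := V ≃ Fin (Fintype.card V))
    exact_mod_cast h'
  have hrho0 : ∀ v, 0 ≤ rho A v := fun v => aux_rho_nonneg hA v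
  have hmain : (Fintype.card (V ≃ Fin (Fintype.card V)) : ℝ)
      * (Fintype.card (V ≃ Fin (Fintype.card V)) : ℝ)
      * (∑ v : V, rho A v * (1 + max 0 (1 - rho A v - ∑ u ∈ nbhd A v, rho A u)))
      ≤ ∑ L1 : V ≃ Fin (Fintype.card V), ∑ L2 : V ≃ Fin (Fintype.card V),
          ((goodSet A L1 L2).card : ℝ) := by
    have hswap : ∑ L1 : V ≃ Fin (Fintype.card V), ∑ L2 : V ≃ Fin (Fintype.card V),
        ((goodSet A L1 L2).card : ℝ)
        = ∑ v : V, ((Fintype.card (V ≃ Fin (Fintype.card V)) : ℝ)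
            * (∑ L2 : V ≃ Fin (Fintype.card V), auxF A v L2)
          + (∑ L1 : V ≃ Fin (Fintype.card V), auxF A v L1)
            * (∑ L2 : V ≃ Fin (Fintype.card V), auxG A v L2)) := by
      calc ∑ L1 : V ≃ Fin (Fintype.card V), ∑ L2 : V ≃ Fin (Fintype.card V),
          ((goodSet A L1 L2).card : ℝ)
          = ∑ L1 : V ≃ Fin (Fintype.card V), ∑ L2 : V ≃ Fin (Fintype.card V),
              ∑ v : V, (auxF A v L2 + auxF A v L1 * auxG A v L2) :=
            Finset.sum_congr rfl (fun L1 _ => Finset.sum_congr rfl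
              (fun L2 _ => aux_good_card L1 L2))
        _ = ∑ L1 : V ≃ Fin (Fintype.card V), ∑ v : V, ∑ L2 : V ≃ Fin (Fintype.card V),
              (auxF A v L2 + auxF A v L1 * auxG A v L2) :=
            Finset.sum_congr rfl (fun L1 _ => Finset.sum_comm)
        _ = ∑ v : V, ∑ L1 : V ≃ Fin (Fintype.card V), ∑ L2 : V ≃ Fin (Fintype.card V),
              (auxF A v L2 + auxF A v L1 * auxG A v L2) := Finset.sum_comm
        _ = ∑ v : V, ((Fintype.card (V ≃ Fin (Fintype.card V)) : ℝ)
              * (∑ L2 : V ≃ Fin (Fintype.card V), auxF A v L2)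
            + (∑ L1 : V ≃ Fin (Fintype.card V), auxF A v L1)
              * (∑ L2 : V ≃ Fin (Fintype.card V), auxG A v L2)) := by
            apply Finset.sum_congr rfl
            intro v _
            have hstep : ∀ L1 : V ≃ Fin (Fintype.card V),
                ∑ L2 : V ≃ Fin (Fintype.card V), (auxF A v L2 + auxF A v L1 * auxG A v L2)
                = (∑ L2 : V ≃ Fin (Fintype.card V), auxF A v L2)
                  + auxF A v L1 * (∑ L2 : V ≃ Fin (Fintype.card V), auxG A v L2) := by
              intro L1
              rw [Finset.sum_add_distrib, ← Finset.mul_sum]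
            rw [Finset.sum_congr rfl (fun L1 _ => hstep L1), Finset.sum_add_distrib,
              Finset.sum_const, Finset.card_univ, nsmul_eq_mul, Finset.sum_mul]
    rw [hswap, Finset.mul_sum]
    apply Finset.sum_le_sum
    intro v _
    rw [auxF_sum hA v]
    have h1 := auxG_sum hA v
    have h2 := hrho0 v
    have h3 : (0:ℝ) ≤ max 0 (1 - rho A v - ∑ u ∈ nbhd A v, rho A u) := le_max_left _ _
    have h4 : (0:ℝ) ≤ ∑ L : V ≃ Fin (Fintype.card V), auxG A v L :=
      Finset.sum_nonneg (s := (Finset.univ : Finset (V ≃ Fin (Fintype.card V))))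
        (f := auxG A v) (fun L _ => auxG_nonneg v L)
    have h5 := mul_le_mul_of_nonneg_left h1 (mul_nonneg (le_of_lt hM0) h2)
    nlinarith [h5]
  have hne : (Finset.univ : Finset ((V ≃ Fin (Fintype.card V)) × (V ≃ Fin (Fintype.card V)))).Nonempty :=
    ⟨(Fintype.equivFin V, Fintype.equivFin V), Finset.mem_univ _⟩
  have havg : ∑ _p ∈ (Finset.univ : Finset ((V ≃ Fin (Fintype.card V)) × (V ≃ Fin (Fintype.card V)))),
      (∑ v : V, rho A v * (1 + max 0 (1 - rho A v - ∑ u ∈ nbhd A v, rho A u)))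
      ≤ ∑ p ∈ (Finset.univ : Finset ((V ≃ Fin (Fintype.card V)) × (V ≃ Fin (Fintype.card V)))),
          ((goodSet A p.1 p.2).card : ℝ) := by
    rw [Finset.sum_const, Finset.card_univ, Fintype.card_prod, nsmul_eq_mul,
      Fintype.sum_prod_type]
    push_cast
    exact hmain
  obtain ⟨p, _, hp⟩ := Finset.exists_le_of_sum_le hne havg
  exact ⟨goodSet A p.1 p.2, aux_good_acyclic hA p.1 p.2, hp⟩
end

section
/- For any finite simple loopless digraph D, there exists a labeling L*: V(D) → {1,…,n} such that the DL algorithm applied with L* outputs a minimum-size feedback vertex set. -/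
open Finset
open scoped Classical

variable {V : Type*}

/-- For any labeling, the DL output is a feedback vertex set. -/
lemma dl_fvs [Fintype V] (A : V → V → Prop) (hA : Irreflexive A)
    (L : V ≃ Fin (Fintype.card V)) :
    IsAcyclicOn A (Finset.univ \ DLout A L) := by
  intro v hv
  set T' := Finset.univ \ DLout A L with hT'
  set R' : V → V → Prop := fun x y => x ∈ T' ∧ y ∈ T' ∧ A x y with hR'
  set C : Finset V := Finset.univ.filter
    (fun x => Relation.TransGen R' v x ∧ Relation.TransGen R' x v) with hC
  have hvC : v ∈ C := by
    simp only [hC, Finset.mem_filter, Finset.mem_univ, true_and]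
    exact ⟨hv, hv⟩
  obtain ⟨u, huC, hmin⟩ := Finset.exists_min_image C (fun x => L x) ⟨v, hvC⟩
  simp only [hC, Finset.mem_filter, Finset.mem_univ, true_and] at huC
  obtain ⟨hvu, huv⟩ := huC
  have huu : Relation.TransGen R' u u := huv.trans hvu
  -- right out-neighbor
  obtain ⟨w, hw1, hw2⟩ := Relation.TransGen.head'_iff.1 huu
  obtain ⟨w', hw'1, hw'2⟩ := Relation.TransGen.tail'_iff.1 huu
  have hwC : w ∈ C := by
    simp only [hC, Finset.mem_filter, Finset.mem_univ, true_and]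
    exact ⟨hvu.tail hw1, Relation.TransGen.trans_right hw2 huv⟩
  have hw'C : w' ∈ C := by
    simp only [hC, Finset.mem_filter, Finset.mem_univ, true_and]
    exact ⟨Relation.TransGen.trans_left hvu hw'1, (Relation.TransGen.single hw'2).trans huv⟩
  have hneq : u ≠ w := by rintro rfl; exact hA u hw1.2.2
  have hneq' : u ≠ w' := by rintro rfl; exact hA u hw'2.2.2
  have hlt : L u < L w :=
    lt_of_le_of_ne (hmin w hwC) (fun h => hneq (L.injective h))
  have hlt' : L u < L w' :=
    lt_of_le_of_ne (hmin w' hw'C) (fun h => hneq' (L.injective h))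
  have huDL : u ∈ DLout A L := by
    simp only [DLout, Finset.mem_filter, Finset.mem_univ, true_and]
    refine ⟨⟨w', ?_, hlt'⟩, ⟨w, ?_, hlt⟩⟩
    · simp only [inN, Finset.mem_filter, Finset.mem_univ, true_and]
      exact hw'2.2.2
    · simp only [outN, Finset.mem_filter, Finset.mem_univ, true_and]
      exact hw1.2.2
  have : u ∈ T' := hw1.1
  rw [hT', Finset.mem_sdiff] at this
  exact this.2 huDL

/-- Optimality of the DL algorithm: some labeling yields a minimum feedback
vertex set. -/
theorem stmt_6 [Fintype V] (A : V → V → Prop) (hA : Irreflexive A) :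
    ∃ L : V ≃ Fin (Fintype.card V),
      IsAcyclicOn A (Finset.univ \ DLout A L) ∧
      ∀ S' : Finset V, IsAcyclicOn A (Finset.univ \ S') →
        (DLout A L).card ≤ S'.card := by
  classical
  -- choose a minimum feedback vertex set S₀
  set Cand : Finset (Finset V) :=
    Finset.univ.filter (fun S' => IsAcyclicOn A (Finset.univ \ S')) with hCand
  have hne : (Finset.univ : Finset V) ∈ Cand := by
    simp only [hCand, Finset.mem_filter, Finset.mem_univ, true_and]
    intro v hv
    obtain ⟨c, hc, -⟩ := Relation.TransGen.head'_iff.1 hv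
    have := hc.1
    simp at this
  obtain ⟨S₀, hS₀C, hS₀min⟩ := Finset.exists_min_image Cand (fun S => S.card) ⟨_, hne⟩
  simp only [hCand, Finset.mem_filter, Finset.mem_univ, true_and] at hS₀C
  -- the strict relation: S₀ before its complement, complement ordered by paths
  set RT : V → V → Prop := fun a b => a ∈ Finset.univ \ S₀ ∧ b ∈ Finset.univ \ S₀ ∧ A a b
    with hRT
  set sRel : V → V → Prop := fun x y =>
    (x ∈ S₀ ∧ y ∉ S₀) ∨ (x ∉ S₀ ∧ y ∉ S₀ ∧ Relation.TransGen RT x y) with hsRel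
  have sIrr : ∀ x, ¬ sRel x x := by
    intro x hx
    rcases hx with ⟨h1, h2⟩ | ⟨h1, h2, h3⟩
    · exact h2 h1
    · exact hS₀C x h3
  have sTrans : ∀ x y z, sRel x y → sRel y z → sRel x z := by
    rintro x y z (⟨hx, hy⟩ | ⟨hx, hy, hxy⟩) (⟨hy', hz⟩ | ⟨hy', hz, hyz⟩)
    · exact absurd hy' hy
    · exact Or.inl ⟨hx, hz⟩
    · exact absurd hy' hy
    · exact Or.inr ⟨hx, hz, hxy.trans hyz⟩
  set r : V → V → Prop := fun x y => x = y ∨ sRel x y with hr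
  haveI : IsPartialOrder V r :=
    { refl := fun a => Or.inl rfl
      trans := by
        rintro a b c (rfl | hab) (rfl | hbc)
        · exact Or.inl rfl
        · exact Or.inr hbc
        · exact Or.inr hab
        · exact Or.inr (sTrans _ _ _ hab hbc)
      antisymm := by
        rintro a b hab hba
        rcases hab with rfl | hab
        · rfl
        rcases hba with rfl | hba
        · rfl
        exact absurd (sTrans _ _ _ hab hba) (sIrr a) }
  obtain ⟨s, hs, hrs⟩ := extend_partialOrder r
  haveI : IsTrans V s := hs.1.1.2
  haveI : IsAntisymm V s := hs.1.2
  haveI : IsTotal V s := hs.2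
  set l : List V := Finset.sort Finset.univ s with hl
  have hmem : ∀ x : V, x ∈ l := fun x => by simp [hl]
  have hnd : l.Nodup := Finset.sort_nodup _ s
  have hsorted : l.Pairwise s := Finset.pairwise_sort _ s
  have hlen : l.length = Fintype.card V := by
    rw [hl, Finset.length_sort]; exact Finset.card_univ
  set e : Fin l.length ≃ V := List.Nodup.getEquivOfForallMemList l hnd hmem with he
  set L : V ≃ Fin (Fintype.card V) := e.symm.trans (finCongr hlen) with hL
  -- key: sRel implies label increase
  have key : ∀ u w : V, sRel u w → L u < L w := by
    intro u w huw
    have hne' : u ≠ w := fun h => sIrr u (h ▸ huw)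
    have hsuw : s u w := hrs u w (Or.inr huw)
    rcases lt_trichotomy (L u) (L w) with h | h | h
    · exact h
    · exact absurd (L.injective h) hne'
    · exfalso
      have hlt : e.symm w < e.symm u := by
        rw [Fin.lt_def] at h ⊢
        exact h
      have : s (e (e.symm w)) (e (e.symm u)) := by
        have := hsorted.rel_get_of_lt hlt
        simpa [he] using this
      simp only [Equiv.apply_symm_apply] at this
      exact hne' (antisymm hsuw this)
  refine ⟨L, dl_fvs A hA L, ?_⟩
  intro S' hS'
  have hsub : DLout A L ⊆ S₀ := by
    intro u hu
    by_contra huS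
    simp only [DLout, Finset.mem_filter, Finset.mem_univ, true_and] at hu
    obtain ⟨⟨w, hwmem, hwlt⟩, -⟩ := hu
    simp only [inN, Finset.mem_filter, Finset.mem_univ, true_and] at hwmem
    have hswu : sRel w u := by
      by_cases hwS : w ∈ S₀
      · exact Or.inl ⟨hwS, huS⟩
      · refine Or.inr ⟨hwS, huS, Relation.TransGen.single ?_⟩
        refine ⟨?_, ?_, hwmem⟩ <;> simp [hwS, huS]
    exact absurd (key w u hswu) (not_lt.2 (le_of_lt hwlt))
  calc (DLout A L).card ≤ S₀.card := Finset.card_le_card hsub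
    _ ≤ S'.card := hS₀min S' (by simp [hCand, hS'])
end

section
/- For a uniformly random permutation of the vertices of a finite simple loopless digraph D with n vertices, the expected size of the DL output S equals n − Σ_{v∈V(D)} (1/(1+d_v⁺) + 1/(1+d_v⁻) − 1/(1+d_v)). -/
open Finset
open scoped Classical

variable {V : Type*}

lemma count_max [Fintype V] (T : Finset V) (v : V) (hv : v ∈ T) :
    T.card * (Finset.univ.filter
        (fun L : V ≃ Fin (Fintype.card V) => ∀ w ∈ T, L w ≤ L v)).card
      = Fintype.card (V ≃ Fin (Fintype.card V)) := by
  classical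
  set fib : V → Finset (V ≃ Fin (Fintype.card V)) := fun t => Finset.univ.filter (fun L => ∀ w ∈ T, L w ≤ L t)
    with hfib
  have hmem : ∀ (t : V) (L : V ≃ Fin (Fintype.card V)), L ∈ fib t ↔ ∀ w ∈ T, L w ≤ L t := by
    intro t L; simp [hfib]
  have hcover : (Finset.univ : Finset (V ≃ Fin (Fintype.card V))) = T.biUnion fib := by
    ext L
    simp only [mem_biUnion, mem_univ, true_iff]
    obtain ⟨t, ht, hmax⟩ := T.exists_max_image (fun w => L w) ⟨v, hv⟩
    exact ⟨t, ht, (hmem t L).mpr hmax⟩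
  have hdisj : (T : Set V).PairwiseDisjoint fib := by
    intro a ha b hb hab
    simp only [Function.onFun, Finset.disjoint_left]
    intro L hLa hLb
    rw [hmem] at hLa hLb
    exact hab (L.injective (le_antisymm (hLb a (Finset.mem_coe.mp ha))
      (hLa b (Finset.mem_coe.mp hb))))
  have hinv : ∀ (t : V) (L : V ≃ Fin (Fintype.card V)), (L.trans (Equiv.swap (L t) (L v))).trans
      (Equiv.swap ((L.trans (Equiv.swap (L t) (L v))) t)
        ((L.trans (Equiv.swap (L t) (L v))) v)) = L := by
    intro t L
    have h1 : (L.trans (Equiv.swap (L t) (L v))) t = L v := by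
      simp [Equiv.swap_apply_left]
    have h2 : (L.trans (Equiv.swap (L t) (L v))) v = L t := by
      simp [Equiv.swap_apply_right]
    rw [h1, h2, Equiv.swap_comm, Equiv.trans_assoc, Equiv.swap_swap, Equiv.trans_refl]
  have hcard : ∀ t ∈ T, (fib t).card = (fib v).card := by
    intro t ht
    apply Finset.card_nbij'
      (fun L => L.trans (Equiv.swap (L t) (L v)))
      (fun L => L.trans (Equiv.swap (L t) (L v)))
    · intro L hL
      rw [Finset.mem_coe, hmem] at hL ⊢
      intro w hw
      simp only [Equiv.trans_apply, Equiv.swap_apply_right]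
      rcases eq_or_ne (L w) (L t) with h | h
      · rw [h, Equiv.swap_apply_left]
        try exact hL v hv
      rcases eq_or_ne (L w) (L v) with h2 | h2
      · rw [h2, Equiv.swap_apply_right]
        try exact hL t ht
      · rw [Equiv.swap_apply_of_ne_of_ne h h2]; exact hL w hw
    · intro L hL
      rw [Finset.mem_coe, hmem] at hL ⊢
      intro w hw
      simp only [Equiv.trans_apply, Equiv.swap_apply_left]
      rcases eq_or_ne (L w) (L t) with h | h
      · rw [h, Equiv.swap_apply_left]
        try exact le_refl _
      rcases eq_or_ne (L w) (L v) with h2 | h2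
      · rw [h2, Equiv.swap_apply_right]
        try exact hL t ht
      · rw [Equiv.swap_apply_of_ne_of_ne h h2]
        exact hL w hw
    · intro L _; exact hinv t L
    · intro L _; exact hinv t L
  calc T.card * (fib v).card = ∑ t ∈ T, (fib t).card := by
        rw [Finset.sum_congr rfl hcard, Finset.sum_const, smul_eq_mul]
    _ = Fintype.card (V ≃ Fin (Fintype.card V)) := by
        rw [← Finset.card_biUnion (fun a ha b hb hab => hdisj ha hb hab), ← hcover,
          Finset.card_univ]

lemma count_max' [Fintype V] (s : Finset V) (v : V) (hvs : v ∉ s) :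
    ((s.card : ℝ) + 1) * ((Finset.univ.filter
        (fun L : V ≃ Fin (Fintype.card V) => ∀ w ∈ s, L w ≤ L v)).card : ℝ)
      = (Fintype.card (V ≃ Fin (Fintype.card V)) : ℝ) := by
  have h := count_max (insert v s) v (mem_insert_self v s)
  have hfe : Finset.univ.filter
      (fun L : V ≃ Fin (Fintype.card V) => ∀ w ∈ insert v s, L w ≤ L v)
      = Finset.univ.filter (fun L => ∀ w ∈ s, L w ≤ L v) := by
    apply Finset.filter_congr
    intro L _
    simp [forall_eq_or_imp]
  rw [hfe, Finset.card_insert_of_notMem hvs] at h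
  have := congrArg (fun m : ℕ => (m : ℝ)) h
  push_cast at this
  linarith [this]

/-- Expected DL output size: `E[|S|] = n − Σ_v ρ_D(v)`. -/
theorem stmt_9 [Fintype V] (A : V → V → Prop) (hA : Irreflexive A) :
    (∑ L : V ≃ Fin (Fintype.card V), ((DLout A L).card : ℝ)) /
      (Fintype.card (V ≃ Fin (Fintype.card V)) : ℝ) =
      (Fintype.card V : ℝ) - ∑ v : V, rho A v := by
  classical
  set N : ℕ := Fintype.card (V ≃ Fin (Fintype.card V)) with hN
  have hNpos : 0 < N := Fintype.card_pos_iff.mpr ⟨Fintype.equivFin V⟩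
  have hNne : (N : ℝ) ≠ 0 := Nat.cast_ne_zero.mpr hNpos.ne'
  -- per-vertex key identity
  have key : ∀ v : V, ((Finset.univ.filter
      (fun L : V ≃ Fin (Fintype.card V) => v ∈ DLout A L)).card : ℝ)
      = (N : ℝ) * (1 - rho A v) := by
    intro v
    have hvo : v ∉ outN A v := by simp [outN, hA v]
    have hvi : v ∉ inN A v := by simp [inN, hA v]
    have hvn : v ∉ nbhd A v := by simp [nbhd, hvi, hvo]
    set Si := Finset.univ.filter
      (fun L : V ≃ Fin (Fintype.card V) => ∀ w ∈ inN A v, L w ≤ L v) with hSi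
    set So := Finset.univ.filter
      (fun L : V ≃ Fin (Fintype.card V) => ∀ w ∈ outN A v, L w ≤ L v) with hSo
    set Sn := Finset.univ.filter
      (fun L : V ≃ Fin (Fintype.card V) => ∀ w ∈ nbhd A v, L w ≤ L v) with hSn
    have hi := count_max' (inN A v) v hvi
    have ho := count_max' (outN A v) v hvo
    have hn := count_max' (nbhd A v) v hvn
    -- complement
    have hcompl : Finset.univ.filter
        (fun L : V ≃ Fin (Fintype.card V) => ¬ (v ∈ DLout A L)) = Si ∪ So := by
      rw [hSi, hSo, ← Finset.filter_or]
      apply Finset.filter_congr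
      intro L _
      simp only [DLout, mem_filter, mem_univ, true_and, eq_iff_iff, not_and_or]
      constructor
      · rintro (h | h)
        · exact Or.inl fun w hw => le_of_not_gt fun hlt => h ⟨w, hw, hlt⟩
        · exact Or.inr fun w hw => le_of_not_gt fun hlt => h ⟨w, hw, hlt⟩
      · rintro (h | h)
        · exact Or.inl fun ⟨w, hw, hlt⟩ => absurd hlt (not_lt.mpr (h w hw))
        · exact Or.inr fun ⟨w, hw, hlt⟩ => absurd hlt (not_lt.mpr (h w hw))
    have hinter : Si ∩ So = Sn := by
      rw [hSi, hSo, hSn, ← Finset.filter_and]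
      apply Finset.filter_congr
      intro L _
      simp only [nbhd, mem_union, eq_iff_iff]
      constructor
      · rintro ⟨h1, h2⟩ w hw
        rcases hw with hw | hw
        · exact h2 w hw
        · exact h1 w hw
      · intro h
        exact ⟨fun w hw => h w (Or.inr hw), fun w hw => h w (Or.inl hw)⟩
    have hsplit := Finset.card_filter_add_card_filter_not
      (s := (Finset.univ : Finset (V ≃ Fin (Fintype.card V))))
      (p := fun L => v ∈ DLout A L)
    have hunion := Finset.card_union_add_card_inter Si So
    rw [hcompl] at hsplit
    rw [hinter] at hunion
    rw [Finset.card_univ, ← hN] at hsplit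
    -- now real arithmetic
    have hicast : ((inN A v).card : ℝ) + 1 ≠ 0 := by positivity
    have hocast : ((outN A v).card : ℝ) + 1 ≠ 0 := by positivity
    have hncast : ((nbhd A v).card : ℝ) + 1 ≠ 0 := by positivity
    have hSiR : (Si.card : ℝ) = (N : ℝ) / (((inN A v).card : ℝ) + 1) := by
      field_simp
      linarith [hi]
    have hSoR : (So.card : ℝ) = (N : ℝ) / (((outN A v).card : ℝ) + 1) := by
      field_simp
      linarith [ho]
    have hSnR : (Sn.card : ℝ) = (N : ℝ) / (((nbhd A v).card : ℝ) + 1) := by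
      field_simp
      linarith [hn]
    have hsplitR : ((Finset.univ.filter
        (fun L : V ≃ Fin (Fintype.card V) => v ∈ DLout A L)).card : ℝ)
        + ((Si ∪ So).card : ℝ) = (N : ℝ) := by exact_mod_cast congrArg (fun m : ℕ => (m : ℝ)) hsplit
    have hunionR : ((Si ∪ So).card : ℝ) + (Sn.card : ℝ)
        = (Si.card : ℝ) + (So.card : ℝ) := by exact_mod_cast hunion
    rw [rho]
    have e1 : 1 / (1 + ((outN A v).card : ℝ)) = (So.card : ℝ) / N := by
      rw [hSoR]; field_simp; ring
    have e2 : 1 / (1 + ((inN A v).card : ℝ)) = (Si.card : ℝ) / N := by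
      rw [hSiR]; field_simp; ring
    have e3 : 1 / (1 + ((nbhd A v).card : ℝ)) = (Sn.card : ℝ) / N := by
      rw [hSnR]; field_simp; ring
    rw [e1, e2, e3]
    field_simp
    linarith [hsplitR, hunionR]
  -- exchange sums
  have hswap : ∑ L : V ≃ Fin (Fintype.card V), ((DLout A L).card : ℝ)
      = ∑ v : V, ((Finset.univ.filter
          (fun L : V ≃ Fin (Fintype.card V) => v ∈ DLout A L)).card : ℝ) := by
    have h1 : ∀ L : V ≃ Fin (Fintype.card V),
        ((DLout A L).card : ℝ) = ∑ v : V, if v ∈ DLout A L then (1 : ℝ) else 0 := by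
      intro L
      rw [Finset.sum_ite_mem]
      simp [Finset.univ_inter]
    have h2 : ∀ v : V, ((Finset.univ.filter
        (fun L : V ≃ Fin (Fintype.card V) => v ∈ DLout A L)).card : ℝ)
        = ∑ L : V ≃ Fin (Fintype.card V), if v ∈ DLout A L then (1 : ℝ) else 0 := by
      intro v
      rw [Finset.sum_ite, Finset.sum_const, Finset.sum_const]
      simp
    simp_rw [h1, h2]
    exact Finset.sum_comm
  rw [hswap]
  have : ∑ v : V, ((Finset.univ.filter
      (fun L : V ≃ Fin (Fintype.card V) => v ∈ DLout A L)).card : ℝ)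
      = ∑ v : V, (N : ℝ) * (1 - rho A v) := Finset.sum_congr rfl (fun v _ => key v)
  rw [this]
  have hsum : ∑ v : V, (N : ℝ) * (1 - rho A v)
      = (N : ℝ) * ((Fintype.card V : ℝ) - ∑ v : V, rho A v) := by
    rw [← Finset.mul_sum]
    congr 1
    rw [Finset.sum_sub_distrib, Finset.sum_const, Finset.card_univ, nsmul_eq_mul, mul_one]
  rw [hsum]
  exact mul_div_cancel_left₀ _ hNne
end
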